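/- Let k be a field with algebraic closure k̄, and let m ≤ n be positive integers. Let G be a nonzero homogeneous polynomial of degree d in the C(n,m) Plücker coordinates (with coefficients in k̄) whose restriction to the Grassmannian Grass(m,n) under the Plücker embedding is not identically zero, i.e., G does not vanish identically when evaluated on the m×m minors of all m×n matrices of rank m over k̄. If K is a field extension of k contained in k̄ with more than m·d elements, then there exists an m×n matrix A with entries in K, of rank m, such that G evaluated on the m×m minors of A is nonzero; that is, there is a K-rational point of Grass(m,n) not contained in the hypersurface defined by G. -/

import Mathlib

/-!
Pulling `G` back along the Plücker map gives a polynomial `F` in the `m n` entries of a generic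
matrix, homogeneous of degree `m d`, and nonzero because `G` does not vanish on the Grassmannian.
A `K`-linear functional `k̄ → K` that is nonzero on some coefficient of `F` turns `F` into a
nonzero homogeneous polynomial over `K` of the same degree, which does not vanish at some
`K`-point since `m d < #K`; `F` does not vanish there either. For `d > 0` a nonzero value of `G`
forces a nonzero Plücker coordinate, hence rank `m`; for `d = 0`, `G` is constant.
-/

open MvPolynomial

/-- The `m × m` minors of an `m × n` matrix, indexed by the `m`-element subsets of the
columns (taken in increasing order); these are the Plücker coordinates of its row span. -/
noncomputable def matrixPlueckerCoords {R : Type*} [CommRing R] {m n : ℕ}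
    (A : Matrix (Fin m) (Fin n) R) (s : {s : Finset (Fin n) // s.card = m}) : R :=
  (A.submatrix id (fun i => ((s.1.orderIsoOfFin s.2 i : s.1) : Fin n))).det

open Cardinal

section Descent
variable {σ K L : Type*}

theorem MvPolynomial.eval_addMonoidAlgebraMap [CommSemiring K] [CommSemiring L] [Algebra K L]
    (f : L →ₗ[K] K) (F : MvPolynomial σ L) (a : σ → K) :
    eval a (AddMonoidAlgebra.map f.toAddMonoidHom F : MvPolynomial σ K)
      = f (eval (algebraMap K L ∘ a) F) := by
  induction F using MvPolynomial.induction_on' with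
  | monomial s c =>
    have hmap : (AddMonoidAlgebra.map f.toAddMonoidHom (monomial s c) : MvPolynomial σ K)
        = monomial s (f c) := AddMonoidAlgebra.map_single ..
    have hprod : (s.prod fun i e => (algebraMap K L ∘ a) i ^ e)
        = algebraMap K L (s.prod fun i e => a i ^ e) := by
      simp [map_finsuppProd]
    rw [hmap, eval_monomial, eval_monomial, mul_comm c, hprod, ← Algebra.smul_def, map_smul,
      smul_eq_mul, mul_comm]
  | add p q hp hq =>
    rw [AddMonoidAlgebra.map_add, map_add, hp, hq, map_add, map_add]

theorem MvPolynomial.IsHomogeneous.exists_eval_algebraMap_ne_zero [Field K] [CommRing L]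
    [Algebra K L] {F : MvPolynomial σ L} {n : ℕ} (hF : F.IsHomogeneous n) (hF₀ : F ≠ 0)
    (hn : n ≤ #K) : ∃ r : σ → K, eval (algebraMap K L ∘ r) F ≠ 0 := by
  obtain ⟨s, hs⟩ := exists_coeff_ne_zero hF₀
  obtain ⟨f, hf⟩ : ∃ f : Module.Dual K L, f (coeff s F) ≠ 0 := by
    by_contra! h
    exact hs ((Module.forall_dual_apply_eq_zero_iff K _).mp h)
  set Fₖ : MvPolynomial σ K := AddMonoidAlgebra.map f.toAddMonoidHom F
  have hFₖ : Fₖ.IsHomogeneous n := fun t ht ↦ hF fun h ↦ ht (by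
    simp [Fₖ, coeff_addMonoidAlgebraMap, h])
  have hFₖ₀ : Fₖ ≠ 0 := fun h ↦ hf (by
    simpa [Fₖ, coeff_addMonoidAlgebraMap] using congrArg (coeff s) h)
  obtain ⟨r, hr⟩ : ∃ r, eval r Fₖ ≠ 0 := by
    by_contra! h
    exact hFₖ₀ (hFₖ.eq_zero_of_forall_eval_eq_zero_of_le_card h hn)
  exact ⟨r, fun h ↦ hr (by rw [eval_addMonoidAlgebraMap, h, map_zero])⟩

end Descent

theorem MvPolynomial.IsHomogeneous.eval_eq_eval_of_degree_zero {R σ : Type*} [CommSemiring R]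
    {G : MvPolynomial σ R} (hG : G.IsHomogeneous 0) (x y : σ → R) : eval x G = eval y G := by
  obtain ⟨c, rfl⟩ : ∃ c, G = C c :=
    ⟨_, totalDegree_eq_zero_iff_eq_C.mp ((totalDegree_zero_iff_isHomogeneous σ).mpr hG)⟩
  simp

theorem MvPolynomial.IsHomogeneous.ne_zero_of_eval_ne_zero {R σ : Type*} [CommSemiring R]
    {G : MvPolynomial σ R} {d : ℕ} (hG : G.IsHomogeneous d) (hd : d ≠ 0) {x : σ → R}
    (hx : eval x G ≠ 0) : x ≠ 0 := by
  rintro rfl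
  rw [eval_zero, constantCoeff_eq, hG.coeff_eq_zero (by simpa using hd.symm)] at hx
  exact hx rfl

theorem Matrix.isHomogeneous_det {R σ ι : Type*} [CommRing R] [Fintype ι] [DecidableEq ι]
    (M : Matrix ι ι (MvPolynomial σ R)) (h : ∀ i j, (M i j).IsHomogeneous 1) :
    M.det.IsHomogeneous (Fintype.card ι) := by
  rw [Matrix.det_apply]
  refine IsHomogeneous.sum _ _ _ fun p _ ↦ ?_
  rw [Units.smul_def]
  refine zsmul_mem (?_ : _ ∈ homogeneousSubmodule σ R _) _
  have hp := IsHomogeneous.prod Finset.univ (fun i ↦ M (p i) i) (fun _ ↦ 1) fun i _ ↦ h _ _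
  rwa [Finset.sum_const, smul_eq_mul, mul_one, Finset.card_univ] at hp

theorem Matrix.rank_eq_of_det_submatrix_ne_zero {K ι κ : Type*} [Field K] [Fintype ι]
    [DecidableEq ι] [Fintype κ] (A : Matrix ι κ K) (f : ι → κ)
    (h : (A.submatrix id f).det ≠ 0) : A.rank = Fintype.card ι :=
  le_antisymm A.rank_le_card_height <| by
    rw [← Matrix.rank_of_isUnit _ ((Matrix.isUnit_iff_isUnit_det _).2 h.isUnit)]
    exact A.rank_submatrix_le id f

theorem Matrix.exists_rank_eq_of_le (K : Type*) [Field K] {m n : ℕ} (hmn : m ≤ n) :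
    ∃ A : Matrix (Fin m) (Fin n) K, A.rank = m := by
  refine ⟨(1 : Matrix (Fin n) (Fin n) K).submatrix (Fin.castLE hmn) id, ?_⟩
  simpa using (Matrix.rank_eq_of_det_submatrix_ne_zero _ (Fin.castLE hmn) (by
    rw [submatrix_submatrix, Function.comp_id, Function.id_comp,
      submatrix_one _ (Fin.castLE_injective hmn), det_one]
    exact one_ne_zero))

section Pluecker
variable {R : Type*} {m n : ℕ}

theorem matrixPlueckerCoords_map [CommRing R] {S : Type*} [CommRing S] (φ : R →+* S)
    (A : Matrix (Fin m) (Fin n) R) (s : {s : Finset (Fin n) // s.card = m}) :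
    matrixPlueckerCoords (A.map φ) s = φ (matrixPlueckerCoords A s) := by
  rw [matrixPlueckerCoords, matrixPlueckerCoords, RingHom.map_det]
  rfl

theorem rank_eq_of_matrixPlueckerCoords_ne_zero [Field R] {A : Matrix (Fin m) (Fin n) R}
    {s : {s : Finset (Fin n) // s.card = m}} (h : matrixPlueckerCoords A s ≠ 0) : A.rank = m := by
  simpa using A.rank_eq_of_det_submatrix_ne_zero (fun i ↦ (s.1.orderIsoOfFin s.2 i : Fin n)) h

noncomputable def plueckerPullback [CommRing R]
    (G : MvPolynomial {s : Finset (Fin n) // s.card = m} R) :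
    MvPolynomial (Fin m × Fin n) R :=
  aeval (matrixPlueckerCoords (Matrix.mvPolynomialX (Fin m) (Fin n) R)) G

theorem eval_plueckerPullback [CommRing R] (G : MvPolynomial {s : Finset (Fin n) // s.card = m} R)
    (A : Matrix (Fin m) (Fin n) R) :
    eval (fun p ↦ A p.1 p.2) (plueckerPullback G) = eval (matrixPlueckerCoords A) G := by
  rw [plueckerPullback, aeval_eq_bind₁, eval, eval₂Hom_bind₁]
  congr 2
  funext s
  rw [← matrixPlueckerCoords_map]
  congr 1
  exact Matrix.mvPolynomialX_map_eval₂ _ A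

theorem MvPolynomial.IsHomogeneous.plueckerPullback [CommRing R]
    {G : MvPolynomial {s : Finset (Fin n) // s.card = m} R} {d : ℕ} (hG : G.IsHomogeneous d) :
    (plueckerPullback G).IsHomogeneous (m * d) := by
  refine hG.aeval _ fun s ↦ ?_
  have := Matrix.isHomogeneous_det ((Matrix.mvPolynomialX (Fin m) (Fin n) R).submatrix id
    fun i ↦ (s.1.orderIsoOfFin s.2 i : Fin n)) fun _ _ ↦ isHomogeneous_X R _
  rwa [Fintype.card_fin] at this

theorem rank_eq_of_eval_matrixPlueckerCoords_ne_zero {K : Type*} [Field K] [CommRing R]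
    [Nontrivial R] [Algebra K R] {G : MvPolynomial {s : Finset (Fin n) // s.card = m} R} {d : ℕ}
    (hG : G.IsHomogeneous d) (hd : d ≠ 0) {A : Matrix (Fin m) (Fin n) K}
    (hA : eval (matrixPlueckerCoords (A.map (algebraMap K R))) G ≠ 0) : A.rank = m := by
  obtain ⟨s, hs⟩ := Function.ne_iff.mp (hG.ne_zero_of_eval_ne_zero hd hA)
  rw [matrixPlueckerCoords_map, Pi.zero_apply, map_ne_zero_iff _ (algebraMap K R).injective] at hs
  exact rank_eq_of_matrixPlueckerCoords_ne_zero hs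

end Pluecker

theorem exists_grassmannian_point_avoiding_hypersurface_general
    (k : Type*) [Field k] (m n : ℕ) (hmn : m ≤ n) (d : ℕ)
    (G : MvPolynomial {s : Finset (Fin n) // s.card = m} (AlgebraicClosure k))
    (hGhom : G.IsHomogeneous d)
    -- `G` does not vanish identically on the Grassmannian:
    (hGgr : ∃ B : Matrix (Fin m) (Fin n) (AlgebraicClosure k),
      B.rank = m ∧ MvPolynomial.eval (matrixPlueckerCoords B) G ≠ 0)
    (K : IntermediateField k (AlgebraicClosure k))
    (hK : ((m * d : ℕ) : Cardinal) < Cardinal.mk K) :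
    ∃ A : Matrix (Fin m) (Fin n) K, A.rank = m ∧
      MvPolynomial.eval
        (matrixPlueckerCoords (A.map ((↑) : K → AlgebraicClosure k))) G ≠ 0 := by
  obtain ⟨B, -, hB⟩ := hGgr
  rcases eq_or_ne d 0 with rfl | hd
  · obtain ⟨A, hA⟩ := Matrix.exists_rank_eq_of_le K hmn
    exact ⟨A, hA, by rwa [hGhom.eval_eq_eval_of_degree_zero _ (matrixPlueckerCoords B)]⟩
  have hF : plueckerPullback G ≠ 0 := fun h ↦ hB <| by
    rw [← eval_plueckerPullback, h, map_zero]
  obtain ⟨r, hr⟩ := hGhom.plueckerPullback.exists_eval_algebraMap_ne_zero hF hK.le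
  set A : Matrix (Fin m) (Fin n) K := Matrix.of fun i j ↦ r (i, j)
  have hA : eval (matrixPlueckerCoords (A.map (algebraMap K _))) G ≠ 0 := by
    rwa [← eval_plueckerPullback]
  exact ⟨A, rank_eq_of_eval_matrixPlueckerCoords_ne_zero hGhom hd hA, hA⟩

theorem exists_grassmannian_point_avoiding_hypersurface
    (k : Type*) [Field k] (m n : ℕ) (hm : 0 < m) (hmn : m ≤ n) (d : ℕ)
    (G : MvPolynomial {s : Finset (Fin n) // s.card = m} (AlgebraicClosure k))
    (hG : G ≠ 0) (hGhom : G.IsHomogeneous d)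
    -- `G` does not vanish identically on the Grassmannian:
    (hGgr : ∃ B : Matrix (Fin m) (Fin n) (AlgebraicClosure k),
      B.rank = m ∧ MvPolynomial.eval (matrixPlueckerCoords B) G ≠ 0)
    (K : IntermediateField k (AlgebraicClosure k))
    (hK : ((m * d : ℕ) : Cardinal) < Cardinal.mk K) :
    ∃ A : Matrix (Fin m) (Fin n) K, A.rank = m ∧
      MvPolynomial.eval
        (matrixPlueckerCoords (A.map ((↑) : K → AlgebraicClosure k))) G ≠ 0 :=
  exists_grassmannian_point_avoiding_hypersurface_general k m n hmn d G hGhom hGgr K hK
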